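/- Let (X,d) be a δ-hyperbolic space and g an isometry of (X,d). Then for every x ∈ X: (i) d(x, g²x) ≤ d(x, gx) + ℓ(g) + 2δ; (ii) for every integer p ≥ 0, d(x, g^{2^p} x) ≤ d(x, gx) + (2^p − 1)·ℓ(g) + 2pδ; (iii) for every integer n ≥ 1, d(x, gⁿx) ≤ d(x, gx) + (n−1)·ℓ(g) + 4δ·ln(n)/ln(2). -/

import Mathlib

open Metric Filter Set
open scoped Classical ENNReal

noncomputable section

/-- The Gromov product `(x|y)_w`. -/
def gromovProd {X : Type*} [MetricSpace X] (w x y : X) : ℝ :=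
  (dist w x + dist w y - dist x y) / 2

/-- An arclength-parametrized geodesic segment from `x` to `y`,
defined on `[0, dist x y]`. -/
def IsGeodesicSegment {X : Type*} [MetricSpace X] (f : ℝ → X) (x y : X) : Prop :=
  f 0 = x ∧ f (dist x y) = y ∧
    ∀ s ∈ Set.Icc (0 : ℝ) (dist x y), ∀ t ∈ Set.Icc (0 : ℝ) (dist x y),
      dist (f s) (f t) = |s - t|

/-- A δ-hyperbolic space: a proper geodesic metric space all of whose geodesic
triangles are δ-thin, in the sense that two points having the same image under the
comparison map onto the associated tripod are at distance at most δ.  (Two points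
with the same tripod image lie on two sides issued from a common vertex `x`, at the
same arclength parameter `t ≤ (y|z)_x`.) -/
def IsDeltaHyperbolic (X : Type*) [MetricSpace X] (δ : ℝ) : Prop :=
  ProperSpace X ∧
    (∀ x y : X, ∃ f : ℝ → X, IsGeodesicSegment f x y) ∧
    (∀ x y z : X, ∀ f g : ℝ → X, IsGeodesicSegment f x y → IsGeodesicSegment g x z →
      ∀ t : ℝ, 0 ≤ t → t ≤ gromovProd x y z → dist (f t) (g t) ≤ δ)

/-- A sequence converging to a point of the Gromov boundary: the Gromov products of
pairs of points of the sequence tend to `+∞`. -/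
def IsGromovSeq {X : Type*} [MetricSpace X] (x₀ : X) (u : ℕ → X) : Prop :=
  ∀ C : ℝ, ∃ N : ℕ, ∀ m n : ℕ, N ≤ m → N ≤ n → C ≤ gromovProd x₀ (u m) (u n)

/-- Two Gromov sequences define the same boundary point when their mutual Gromov
products tend to `+∞`. -/
def GromovSeqEquiv {X : Type*} [MetricSpace X] (x₀ : X) (u v : ℕ → X) : Prop :=
  ∀ C : ℝ, ∃ N : ℕ, ∀ m n : ℕ, N ≤ m → N ≤ n → C ≤ gromovProd x₀ (u m) (v n)

/-- The space is non-elementary: its Gromov boundary has at least three points. -/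
def NonElementary (X : Type*) [MetricSpace X] : Prop :=
  ∃ (x₀ : X) (u v w : ℕ → X), IsGromovSeq x₀ u ∧ IsGromovSeq x₀ v ∧ IsGromovSeq x₀ w ∧
    ¬ GromovSeqEquiv x₀ u v ∧ ¬ GromovSeqEquiv x₀ u w ∧ ¬ GromovSeqEquiv x₀ v w

/-- The action of `Γ` on `X` is by isometries. -/
def IsIsometricAction (Γ X : Type*) [Group Γ] [MetricSpace X] [MulAction Γ X] : Prop :=
  ∀ γ : Γ, Isometry fun x : X => γ • x

/-- The action of `Γ` on `X` is proper. -/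
def IsProperAction (Γ X : Type*) [Group Γ] [MetricSpace X] [MulAction Γ X] : Prop :=
  ∀ (x : X) (R : ℝ), {γ : Γ | dist x (γ • x) ≤ R}.Finite

/-- `diam (Γ\X) ≤ D` for the quotient distance `d̄(Γx,Γy) = inf_γ d(x,γy)`. -/
def CodiamLE (Γ X : Type*) [Group Γ] [MetricSpace X] [MulAction Γ X] (D : ℝ) : Prop :=
  ∀ x y : X, sInf {r : ℝ | ∃ γ : Γ, r = dist x (γ • y)} ≤ D

/-- The entropy of `(X,d)` endowed with a proper isometric action of `Γ`, computed with
the orbit counting measure `μ_xΓ = Σ_γ Dirac (γ • x)` (for a cocompact proper action this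
is the common value of the entropies of all invariant measures). -/
def orbitEntropy (Γ : Type*) {X : Type*} [Group Γ] [MetricSpace X] [MulAction Γ X]
    (x : X) : ℝ :=
  liminf (fun R : ℝ => Real.log (Nat.card {γ : Γ // dist x (γ • x) < R}) / R) atTop

/-- The stable (asymptotic) displacement `ℓ(γ) = lim d(x, γⁿ x)/n`
(the limit exists and is independent of `x`; it is expressed here as a `liminf`). -/
def stableDisp {Γ X : Type*} [Group Γ] [MetricSpace X] [MulAction Γ X] (γ : Γ) (x : X) : ℝ :=
  liminf (fun n : ℕ => dist x (γ ^ n • x) / (n : ℝ)) atTop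

/-- The pointwise systole `sys_Γ(x) = inf {d(x,γx) : γ ≠ 1}`. -/
def ptSystole (Γ : Type*) {X : Type*} [Group Γ] [MetricSpace X] [MulAction Γ X] (x : X) : ℝ :=
  sInf {r : ℝ | ∃ γ : Γ, γ ≠ 1 ∧ r = dist x (γ • x)}

/-- The global systole `Sys_Γ(X) = inf_x sys_Γ(x)`. -/
def globSystole (Γ X : Type*) [Group Γ] [MetricSpace X] [MulAction Γ X] : ℝ :=
  sInf {r : ℝ | ∃ x : X, r = ptSystole Γ x}

/-- The distance of `(X,d)` is convex: for any two affinely reparametrized geodesic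
segments `c₁, c₂`, the function `t ↦ d(c₁(t), c₂(t))` is convex on `[0,1]`. -/
def ConvexDist (X : Type*) [MetricSpace X] : Prop :=
  ∀ (x y x' y' : X) (f g : ℝ → X), IsGeodesicSegment f x y → IsGeodesicSegment g x' y' →
    ConvexOn ℝ (Set.Icc (0 : ℝ) 1) fun t => dist (f (t * dist x y)) (g (t * dist x' y'))

/-- `f` is a local geodesic on the set `s ⊆ ℝ`. -/
def IsLocalGeodesic {X : Type*} [MetricSpace X] (f : ℝ → X) (s : Set ℝ) : Prop :=
  ∀ t ∈ s, ∃ ε > (0 : ℝ), ∀ u ∈ s ∩ Set.Ioo (t - ε) (t + ε), ∀ v ∈ s ∩ Set.Ioo (t - ε) (t + ε),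
    dist (f u) (f v) = |u - v|

/-- Every local geodesic defined on a nontrivial segment extends to a local geodesic
defined on all of `ℝ`. -/
def GeodesicallyComplete (X : Type*) [MetricSpace X] : Prop :=
  ∀ (a b : ℝ), a < b → ∀ f : ℝ → X, IsLocalGeodesic f (Set.Icc a b) →
    ∃ g : ℝ → X, IsLocalGeodesic g Set.univ ∧ ∀ t ∈ Set.Icc a b, g t = f t

/-- The pair `(u,v)` generates a free sub-semigroup: two products of positive powers of
`u` and `v` coincide only when they coincide as words. -/
def FreeSemigroupPair {G : Type*} [Monoid G] (u v : G) : Prop :=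
  Function.Injective ⇑(FreeMonoid.lift fun b : Bool => bif b then u else v)

/-- The pair `(u,v)` generates a free subgroup, free on `{u,v}`. -/
def FreeGroupPair {G : Type*} [Group G] (u v : G) : Prop :=
  Function.Injective ⇑(FreeGroup.lift fun b : Bool => bif b then u else v)

/-- A group is virtually cyclic if it has a cyclic subgroup of finite index. -/
def VirtuallyCyclic (G : Type*) [Group G] : Prop :=
  ∃ H : Subgroup G, H.FiniteIndex ∧ IsCyclic ↥H

/-- The stable displacement of an isometry `g` of `X`. -/
def stableDispIso {X : Type*} [MetricSpace X] (g : X ≃ᵢ X) (x : X) : ℝ :=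
  liminf (fun n : ℕ => dist x ((g ^ n) x) / (n : ℝ)) atTop

/-- The minimal displacement `s(g) = inf_x d(x, g x)` of an isometry `g` of `X`. -/
def minDisp {X : Type*} [MetricSpace X] (g : X ≃ᵢ X) : ℝ :=
  ⨅ x : X, dist x (g x)

/-- Discreteness of a subgroup of the isometry group of a proper metric space,
expressed equivalently by the properness of its natural action. -/
def DiscreteIsomSubgroup {X : Type*} [MetricSpace X] (H : Subgroup (X ≃ᵢ X)) : Prop :=
  ∀ (x : X) (R : ℝ), {g : X ≃ᵢ X | g ∈ H ∧ dist x (g x) ≤ R}.Finite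

/-- The Margulis constant `L(a,b)` of a pair of isometries. -/
def margulisConst {X : Type*} [MetricSpace X] (a b : X ≃ᵢ X) : ℝ :=
  sInf {r : ℝ | ∃ (x : X) (p q : ℤ), p ≠ 0 ∧ q ≠ 0 ∧ a ^ p ≠ 1 ∧ b ^ q ≠ 1 ∧
    r = max (dist x ((a ^ p) x)) (dist x ((b ^ q) x))}

/-- Word length with respect to a generating set `S` (words in `S ∪ S⁻¹`). -/
def wordLength {Γ : Type*} [Group Γ] (S : Set Γ) (γ : Γ) : ℕ :=
  sInf {n : ℕ | ∃ l : List Γ, l.length = n ∧ (∀ s ∈ l, s ∈ S ∨ s⁻¹ ∈ S) ∧ l.prod = γ}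

/-- The algebraic entropy `Ent(Γ,Σ)` of a group with respect to a generating set. -/
def algEntropy (Γ : Type*) [Group Γ] (S : Set Γ) : ℝ :=
  liminf (fun R : ℝ => Real.log (Nat.card {γ : Γ // (wordLength S γ : ℝ) ≤ R}) / R) atTop

/-- `(C, ι)` is a metric realization of the Cayley graph of `(Γ,S)`: `Γ` acts on `C` by
isometries, `ι` is the equivariant vertex embedding, the distance between vertices is the
word distance, and every point of `C` is within distance `1/2` of a vertex. -/
def IsCayleyRealization (Γ : Type*) [Group Γ] (S : Set Γ) (C : Type*) [MetricSpace C]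
    [MulAction Γ C] (ι : Γ → C) : Prop :=
  IsIsometricAction Γ C ∧
    (∀ γ g : Γ, ι (γ * g) = γ • ι g) ∧
    (∀ γ g : Γ, dist (ι γ) (ι g) = (wordLength S (γ⁻¹ * g) : ℝ)) ∧
    (∀ x : C, ∃ γ : Γ, dist x (ι γ) ≤ 1 / 2)

/-- An `α`-HT (`α`-hyperbolically thick) action: an isometric action on a δ-hyperbolic
space all of whose nontrivial elements have stable displacement at least `α`. -/
def IsHTAction (Γ X : Type*) [Group Γ] [MetricSpace X] [MulAction Γ X] (δ α : ℝ) : Prop :=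
  IsDeltaHyperbolic X δ ∧ IsIsometricAction Γ X ∧
    ∀ γ : Γ, γ ≠ 1 → ∀ x : X, α ≤ stableDisp γ x

/-- Witness of an `α`-HT action of `Γ` on some δ-hyperbolic space. -/
structure HTWitness (Γ : Type*) [Group Γ] (δ α : ℝ) where
  X : Type
  [ms : MetricSpace X]
  [ma : MulAction Γ X]
  cond : IsHTAction Γ X δ α

/-- A `(δ,α)`-HT group: non-cyclic, admitting an `α`-HT isometric action on some
δ-hyperbolic space. -/
def IsHTGroup (Γ : Type*) [Group Γ] (δ α : ℝ) : Prop :=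
  ¬ IsCyclic Γ ∧ Nonempty (HTWitness Γ δ α)

/-- Witness for the `(δ,α)`-non-abelian condition on a non-commuting pair `a, b`:
a morphism from `⟨a,b⟩` to a `(δ,α)`-HT group whose image is isomorphic neither to the
trivial group nor to `ℤ`. -/
structure NonAbWitness {Γ : Type*} [Group Γ] (δ α : ℝ) (a b : Γ) where
  G : Type
  [grp : Group G]
  ρ : ↥(Subgroup.closure ({a, b} : Set Γ)) →* G
  ht : IsHTGroup G δ α
  ntriv : ρ.range ≠ ⊥
  notZ : ¬ Nonempty (↥ρ.range ≃* Multiplicative ℤ)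

/-- A `(δ,α)`-non-abelian group. -/
def NonAbelianDA (Γ : Type*) [Group Γ] (δ α : ℝ) : Prop :=
  (∃ a b : Γ, a * b ≠ b * a) ∧
    ∀ a b : Γ, a * b ≠ b * a → Nonempty (NonAbWitness δ α a b)

/-- A `(δ,α)`-transitive non-abelian group: `(δ,α)`-non-abelian, and commutation is a
transitive relation on `Γ \ {1}`. -/
def TransNonAbelianDA (Γ : Type*) [Group Γ] (δ α : ℝ) : Prop :=
  NonAbelianDA Γ δ α ∧
    ∀ a b c : Γ, a ≠ 1 → b ≠ 1 → c ≠ 1 → a * b = b * a → b * c = c * b → a * c = c * a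

/-- Extended-real logarithm of an extended nonnegative real. -/
def ennlog (x : ENNReal) : EReal :=
  if x = 0 then ⊥ else if x = ⊤ then ⊤ else ((Real.log x.toReal : ℝ) : EReal)

/-- The entropy of a metric measure space,
`Ent(Y,d,μ) = liminf_{R→∞} (1/R) ln μ(B(y,R))`, valued in `EReal`. -/
def mmEntropy {Y : Type*} [MetricSpace Y] [MeasurableSpace Y] (μ : MeasureTheory.Measure Y) (y : Y) : EReal :=
  liminf (fun R : ℝ => ((R⁻¹ : ℝ) : EReal) * ennlog (μ (Metric.ball y R))) atTop

end

/-!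
Write `|h| = d(x, hx)` and `b k = |gᵏ| - (k - 1) ℓ(g)`. The heart of the matter is
`b (m + n) ≤ max (b m) (b n) + 2δ`. Either `|gᵐ⁺ⁿ| ≤ |gᵐ| + 2δ` or `|gᵐ⁺ⁿ| ≤ |gⁿ| + 2δ`, and
then this is immediate since `ℓ(g) ≥ 0`; or the orbit points `x, gᵐx, gᵐ⁺ⁿx, g²ᵐ⁺ⁿx, …` form a
broken geodesic whose Gromov products at the breaks are small compared with its segments. By
the local-to-global principle in a δ-hyperbolic space its length grows by at least
`2|gᵐ⁺ⁿ| - |gᵐ| - |gⁿ| - 4δ` per period, so `(m + n) ℓ(g)` is at least that much, which gives the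
inequality. Iterating it along `2ᵖ⁺¹ = 2ᵖ + 2ᵖ`, resp. `n = ⌈n/2⌉ + ⌊n/2⌋`, gives (ii) and (iii).
-/

open Topology

theorem IsGeodesicSegment.dist_apply_right {X : Type*} [MetricSpace X] {f : ℝ → X} {x y : X}
    (hf : IsGeodesicSegment f x y) {t : ℝ} (ht₀ : 0 ≤ t) (ht : t ≤ dist x y) :
    dist (f t) y = dist x y - t := by
  conv_lhs => rw [← hf.2.1]
  rw [hf.2.2 t ⟨ht₀, ht⟩ _ ⟨dist_nonneg, le_rfl⟩, abs_of_nonpos (by linarith)]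
  ring

section GromovProduct

variable {X : Type*} [MetricSpace X]

theorem gromovProd_nonneg (w x y : X) : 0 ≤ gromovProd w x y := by
  have := dist_triangle_left x y w
  unfold gromovProd
  linarith

theorem gromovProd_le_dist_left (w x y : X) : gromovProd w x y ≤ dist w x := by
  have := dist_triangle w x y
  unfold gromovProd
  linarith

theorem gromovProd_comm (w x y : X) : gromovProd w x y = gromovProd w y x := by
  unfold gromovProd
  rw [dist_comm x y]
  ring

theorem gromovProd_le_dist_right (w x y : X) : gromovProd w x y ≤ dist w y := by
  rw [gromovProd_comm]
  exact gromovProd_le_dist_left w y x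

theorem gromovProd_add_gromovProd (w x y : X) :
    gromovProd w x y + gromovProd x w y = dist w x := by
  unfold gromovProd
  rw [dist_comm x w]
  ring

end GromovProduct

namespace IsDeltaHyperbolic

variable {X : Type*} [MetricSpace X] {δ : ℝ}

theorem nonneg (hX : IsDeltaHyperbolic X δ) (x : X) : 0 ≤ δ := by
  obtain ⟨_, hgeo, hthin⟩ := hX
  obtain ⟨f, hf⟩ := hgeo x x
  simpa using hthin x x x f f hf hf 0 le_rfl (by simp [gromovProd])

/-- The four-point condition: at the parameter `t = min …`, the geodesics from `w` to `x`
and to `y`, and those to `y` and to `z`, are `δ`-close. -/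
theorem min_gromovProd_sub_le (hX : IsDeltaHyperbolic X δ) (w x y z : X) :
    min (gromovProd w x y) (gromovProd w y z) - δ ≤ gromovProd w x z := by
  obtain ⟨_, hgeo, hthin⟩ := hX
  obtain ⟨f, hf⟩ := hgeo w x
  obtain ⟨h, hh⟩ := hgeo w y
  obtain ⟨k, hk⟩ := hgeo w z
  set t := min (gromovProd w x y) (gromovProd w y z)
  have ht₀ : 0 ≤ t := le_min (gromovProd_nonneg w x y) (gromovProd_nonneg w y z)
  have htx : t ≤ dist w x := (min_le_left _ _).trans (gromovProd_le_dist_left w x y)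
  have htz : t ≤ dist w z := (min_le_right _ _).trans (gromovProd_le_dist_right w y z)
  have hfh := hthin w x y f h hf hh t ht₀ (min_le_left _ _)
  have hhk := hthin w y z h k hh hk t ht₀ (min_le_right _ _)
  have hxz : dist x z ≤ dist x (f t) + dist (f t) (h t) + dist (h t) (k t) + dist (k t) z :=
    (dist_triangle x (k t) z).trans (by gcongr; exact dist_triangle4 x (f t) (h t) (k t))
  rw [dist_comm x (f t)] at hxz
  rw [hf.dist_apply_right ht₀ htx, hk.dist_apply_right ht₀ htz] at hxz
  unfold gromovProd
  linarith

/-- Local-to-global principle for broken geodesics. Induct on `j`, applying the four-point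
condition at `y (i + 1)` to `y i`, `y j`, `y (i + 2)`: the induction hypothesis at `y (i + 2)`
together with `hy` makes `(y j | y (i + 2))` too large to be the minimum. -/
theorem gromovProd_chain_le (hX : IsDeltaHyperbolic X δ) (y : ℕ → X)
    (hy : ∀ i, gromovProd (y (i + 1)) (y i) (y (i + 2)) +
      gromovProd (y (i + 2)) (y (i + 1)) (y (i + 3)) + 2 * δ < dist (y (i + 1)) (y (i + 2)))
    {i j : ℕ} (hij : i + 2 ≤ j) :
    gromovProd (y (i + 1)) (y i) (y j) ≤ gromovProd (y (i + 1)) (y i) (y (i + 2)) + δ := by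
  obtain ⟨k, rfl⟩ := Nat.exists_eq_add_of_le hij
  induction k generalizing i with
  | zero => simpa using hX.nonneg (y 0)
  | succ k ih =>
    have hnext := ih (i := i + 1) (by omega)
    rw [show i + 1 + 2 + k = i + 2 + (k + 1) by omega, show i + 1 + 1 = i + 2 from rfl,
      show i + 1 + 2 = i + 3 from rfl] at hnext
    have hfour := hX.min_gromovProd_sub_le (y (i + 1)) (y i) (y (i + 2 + (k + 1))) (y (i + 2))
    have hsplit := gromovProd_add_gromovProd (y (i + 1)) (y (i + 2)) (y (i + 2 + (k + 1)))
    have hfar : gromovProd (y (i + 1)) (y i) (y (i + 2)) + δ <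
        gromovProd (y (i + 1)) (y (i + 2 + (k + 1))) (y (i + 2)) := by
      rw [gromovProd_comm (y (i + 1)) (y (i + 2 + (k + 1)))]
      linarith [hy i]
    exact (min_le_iff.mp (by linarith)).resolve_right (not_le.mpr hfar)

end IsDeltaHyperbolic

theorem le_mul_of_tendsto_div_of_mul_le_add {a : ℕ → ℝ} {L c C : ℝ} {N : ℕ} (hN : 0 < N)
    (ha : Tendsto (fun k : ℕ => a k / k) atTop (𝓝 L)) (h : ∀ r : ℕ, r * c ≤ a (r * N) + C) :
    c ≤ N * L := by
  have hmul : Tendsto (fun r : ℕ => r * N) atTop atTop :=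
    tendsto_atTop_mono (fun r => Nat.le_mul_of_pos_right r hN) tendsto_id
  have hupper : Tendsto (fun r : ℕ => (N : ℝ) * (a (r * N) / ((r * N : ℕ) : ℝ))) atTop
      (𝓝 (N * L)) :=
    (ha.comp hmul).const_mul _
  have hlower : Tendsto (fun r : ℕ => c - C / r) atTop (𝓝 c) := by
    simpa using tendsto_const_nhds.sub (tendsto_const_div_atTop_nhds_zero_nat C)
  refine le_of_tendsto_of_tendsto hlower hupper ?_
  filter_upwards [eventually_gt_atTop 0] with r hr
  have hr' : (0 : ℝ) < r := Nat.cast_pos.mpr hr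
  have hN' : (0 : ℝ) < N := Nat.cast_pos.mpr hN
  rw [Nat.cast_mul, mul_div_assoc', mul_comm (r : ℝ), ← div_div, mul_div_cancel_left₀ _ hN'.ne',
    sub_le_iff_le_add, ← add_div, le_div_iff₀ hr', mul_comm]
  exact h r

namespace IsometryEquiv

variable {X : Type*} [MetricSpace X] (g : X ≃ᵢ X) (x : X)

theorem dist_pow_apply_pow_add_apply (i k : ℕ) :
    dist ((g ^ i) x) ((g ^ (i + k)) x) = dist x ((g ^ k) x) := by
  rw [pow_add, mul_apply, (g ^ i).dist_eq]

theorem subadditive_dist_pow_apply : Subadditive fun k : ℕ => dist x ((g ^ k) x) := fun s t =>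
  (dist_triangle x ((g ^ s) x) _).trans_eq (by rw [dist_pow_apply_pow_add_apply])

theorem tendsto_stableDispIso :
    Tendsto (fun n : ℕ => dist x ((g ^ n) x) / n) atTop (𝓝 (stableDispIso g x)) := by
  have h := (subadditive_dist_pow_apply g x).tendsto_lim ⟨0, by rintro _ ⟨k, rfl⟩; positivity⟩
  rwa [stableDispIso, h.liminf_eq]

theorem stableDispIso_nonneg : 0 ≤ stableDispIso g x :=
  ge_of_tendsto' (tendsto_stableDispIso g x) fun _ => by positivity

end IsometryEquiv

/-- `zigzagExp m n k` is the sum of the first `k` terms of `m, n, m, n, …`. -/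
def zigzagExp (m n k : ℕ) : ℕ := (m + n) * (k / 2) + m * (k % 2)

theorem zigzagExp_succ (m n i : ℕ) :
    zigzagExp m n (i + 1) = zigzagExp m n i + if i % 2 = 0 then m else n := by
  rcases Nat.mod_two_eq_zero_or_one i with h | h
  · simp only [zigzagExp, h, if_true, show (i + 1) / 2 = i / 2 by omega,
      show (i + 1) % 2 = 1 by omega]
    ring
  · simp only [zigzagExp, h, one_ne_zero, if_false, show (i + 1) / 2 = i / 2 + 1 by omega,
      show (i + 1) % 2 = 0 by omega]
    ring

theorem zigzagExp_add_two_mul (m n i r : ℕ) :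
    zigzagExp m n (i + 2 * r) = zigzagExp m n i + r * (m + n) := by
  simp only [zigzagExp, Nat.add_mul_div_left _ _ two_pos, Nat.add_mul_mod_self_left]
  ring

section Zigzag

variable {X : Type*} [MetricSpace X] (g : X ≃ᵢ X) (x : X) (m n : ℕ)

theorem dist_zigzag_succ (i : ℕ) :
    dist ((g ^ zigzagExp m n i) x) ((g ^ zigzagExp m n (i + 1)) x) =
      dist x ((g ^ if i % 2 = 0 then m else n) x) := by
  rw [zigzagExp_succ, IsometryEquiv.dist_pow_apply_pow_add_apply]

theorem dist_zigzag_add_two_mul (i r : ℕ) :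
    dist ((g ^ zigzagExp m n i) x) ((g ^ zigzagExp m n (i + 2 * r)) x) =
      dist x ((g ^ (r * (m + n))) x) := by
  rw [zigzagExp_add_two_mul, IsometryEquiv.dist_pow_apply_pow_add_apply]

theorem gromovProd_zigzag (i : ℕ) :
    gromovProd ((g ^ zigzagExp m n (i + 1)) x) ((g ^ zigzagExp m n i) x)
        ((g ^ zigzagExp m n (i + 2)) x) =
      (dist x ((g ^ m) x) + dist x ((g ^ n) x) - dist x ((g ^ (m + n)) x)) / 2 := by
  have h₁ := dist_zigzag_succ g x m n (i + 1)
  have h₂ := dist_zigzag_add_two_mul g x m n i 1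
  rw [mul_one, one_mul] at h₂
  rw [gromovProd, dist_comm, dist_zigzag_succ, h₁, h₂]
  rcases Nat.mod_two_eq_zero_or_one i with h | h
  · simp only [h, show (i + 1) % 2 = 1 by omega, if_true, one_ne_zero, if_false]
  · simp only [h, show (i + 1) % 2 = 0 by omega, if_true, one_ne_zero, if_false, add_comm]

end Zigzag

namespace IsDeltaHyperbolic

variable {X : Type*} [MetricSpace X] {δ : ℝ}

theorem dist_pow_succ_mul_add_le (hX : IsDeltaHyperbolic X δ) (g : X ≃ᵢ X) (x : X)
    {m n : ℕ} (hm : dist x ((g ^ m) x) + 2 * δ < dist x ((g ^ (m + n)) x))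
    (hn : dist x ((g ^ n) x) + 2 * δ < dist x ((g ^ (m + n)) x)) (r : ℕ) :
    dist x ((g ^ ((r + 1) * (m + n))) x) +
        (2 * dist x ((g ^ (m + n)) x) - dist x ((g ^ m) x) - dist x ((g ^ n) x) - 4 * δ) ≤
      dist x ((g ^ ((r + 2) * (m + n))) x) := by
  set y : ℕ → X := fun k => (g ^ zigzagExp m n k) x
  have hchain : ∀ i, gromovProd (y (i + 1)) (y i) (y (i + 2)) +
      gromovProd (y (i + 2)) (y (i + 1)) (y (i + 3)) + 2 * δ < dist (y (i + 1)) (y (i + 2)) := by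
    intro i
    have h₁ := gromovProd_zigzag g x m n (i + 1)
    have h₂ := dist_zigzag_succ g x m n (i + 1)
    simp only [y] at h₁ h₂ ⊢
    rw [gromovProd_zigzag, h₁, h₂]
    rcases Nat.mod_two_eq_zero_or_one (i + 1) with h | h <;>
      simp only [h, if_true, one_ne_zero, if_false] <;> linarith
  have hgain (i : ℕ) (hi : i ≤ 1) :
      dist (y (i + 1)) (y (2 * r + 4)) + dist (y i) (y (i + 1)) -
          (dist x ((g ^ m) x) + dist x ((g ^ n) x) - dist x ((g ^ (m + n)) x)) - 2 * δ ≤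
        dist (y i) (y (2 * r + 4)) := by
    have h := hX.gromovProd_chain_le y hchain (i := i) (j := 2 * r + 4) (by omega)
    rw [gromovProd_zigzag, gromovProd, dist_comm (y (i + 1)) (y i)] at h
    linarith
  have h₀ := hgain 0 zero_le_one
  have h₁ := hgain 1 le_rfl
  have hy₀ := dist_zigzag_add_two_mul g x m n 0 (r + 2)
  have hy₂ := dist_zigzag_add_two_mul g x m n 2 (r + 1)
  have hs₀ := dist_zigzag_succ g x m n 0
  have hs₁ := dist_zigzag_succ g x m n 1
  rw [show 0 + 2 * (r + 2) = 2 * r + 4 by ring] at hy₀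
  rw [show 2 + 2 * (r + 1) = 2 * r + 4 by ring] at hy₂
  simp only [Nat.zero_mod, Nat.one_mod, if_true, one_ne_zero, if_false] at hs₀ hs₁
  simp only [y, zero_add] at h₀ h₁ hy₀ hy₂ hs₀ hs₁
  linarith

theorem two_mul_dist_pow_add_sub_le (hX : IsDeltaHyperbolic X δ) (g : X ≃ᵢ X) (x : X)
    {m n : ℕ} (hm : dist x ((g ^ m) x) + 2 * δ < dist x ((g ^ (m + n)) x))
    (hn : dist x ((g ^ n) x) + 2 * δ < dist x ((g ^ (m + n)) x)) :
    2 * dist x ((g ^ (m + n)) x) - dist x ((g ^ m) x) - dist x ((g ^ n) x) - 4 * δ ≤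
      ((m + n : ℕ) : ℝ) * stableDispIso g x := by
  set c := 2 * dist x ((g ^ (m + n)) x) - dist x ((g ^ m) x) - dist x ((g ^ n) x) - 4 * δ
  have hN : 0 < m + n := by
    by_contra! h
    obtain ⟨rfl, rfl⟩ : m = 0 ∧ n = 0 := by omega
    simp only [pow_zero, IsometryEquiv.coe_one, id, dist_self] at hm
    linarith [hX.nonneg x]
  have hgrowth (r : ℕ) :
      dist x ((g ^ (m + n)) x) + r * c ≤ dist x ((g ^ ((r + 1) * (m + n))) x) := by
    induction r with
    | zero => simp
    | succ r ih => push_cast; linarith [hX.dist_pow_succ_mul_add_le g x hm hn r]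
  refine le_mul_of_tendsto_div_of_mul_le_add hN (IsometryEquiv.tendsto_stableDispIso g x)
    (C := c) fun r => ?_
  cases r with
  | zero => simpa using (by linarith : 0 ≤ c)
  | succ r => push_cast; linarith [hgrowth r, dist_nonneg (x := x) (y := (g ^ (m + n)) x)]

theorem dist_pow_add_sub_le_max (hX : IsDeltaHyperbolic X δ) (g : X ≃ᵢ X) (x : X) (m n : ℕ) :
    dist x ((g ^ (m + n)) x) - (((m + n : ℕ) : ℝ) - 1) * stableDispIso g x ≤
      max (dist x ((g ^ m) x) - ((m : ℝ) - 1) * stableDispIso g x)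
        (dist x ((g ^ n) x) - ((n : ℝ) - 1) * stableDispIso g x) + 2 * δ := by
  have hmℓ := mul_nonneg m.cast_nonneg (IsometryEquiv.stableDispIso_nonneg g x)
  have hnℓ := mul_nonneg n.cast_nonneg (IsometryEquiv.stableDispIso_nonneg g x)
  have hle_m := le_max_left (dist x ((g ^ m) x) - ((m : ℝ) - 1) * stableDispIso g x)
    (dist x ((g ^ n) x) - ((n : ℝ) - 1) * stableDispIso g x)
  have hle_n := le_max_right (dist x ((g ^ m) x) - ((m : ℝ) - 1) * stableDispIso g x)
    (dist x ((g ^ n) x) - ((n : ℝ) - 1) * stableDispIso g x)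
  push_cast
  rcases le_or_gt (dist x ((g ^ (m + n)) x)) (dist x ((g ^ m) x) + 2 * δ) with hm | hm
  · linarith
  rcases le_or_gt (dist x ((g ^ (m + n)) x)) (dist x ((g ^ n) x) + 2 * δ) with hn | hn
  · linarith
  have h := hX.two_mul_dist_pow_add_sub_le g x hm hn
  push_cast at h
  linarith

end IsDeltaHyperbolic

theorem le_add_mul_of_add_self_le {b : ℕ → ℝ} {c : ℝ} (hb : ∀ k, b (k + k) ≤ b k + c) (p : ℕ) :
    b (2 ^ p) ≤ b 1 + p * c := by
  induction p with
  | zero => simp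
  | succ p ih =>
    rw [pow_succ, mul_two]
    push_cast
    linarith [hb (2 ^ p)]

theorem two_mul_sq_sub_half_le_sq {n : ℕ} (hn : 2 ≤ n) : 2 * (n - n / 2) ^ 2 ≤ n ^ 2 := by
  obtain ⟨k, rfl | rfl⟩ := Nat.even_or_odd' n
  · rw [show 2 * k - 2 * k / 2 = k by omega]
    nlinarith
  · rw [show 2 * k + 1 - (2 * k + 1) / 2 = k + 1 by omega]
    nlinarith

theorem le_add_mul_logb_of_add_le_max_add {b : ℕ → ℝ} {c : ℝ} (hc : 0 ≤ c)
    (hb : ∀ m n, b (m + n) ≤ max (b m) (b n) + c) {n : ℕ} (hn : 1 ≤ n) :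
    b n ≤ b 1 + 2 * c * Real.logb 2 n := by
  induction n using Nat.strong_induction_on with
  | _ n ih =>
    obtain rfl | hn₂ := hn.eq_or_lt
    · simp
    set k := n / 2
    have hsplit : n - k + k = n := by omega
    have hk : (k : ℝ) ≤ (n - k : ℕ) := by exact_mod_cast (by omega : k ≤ n - k)
    have hk₀ : (0 : ℝ) < k := by exact_mod_cast (by omega : 0 < k)
    have hlog_le : Real.logb 2 k ≤ Real.logb 2 (n - k : ℕ) :=
      Real.logb_le_logb_of_le one_lt_two hk₀ hk
    have hlog_half : 2 * Real.logb 2 (n - k : ℕ) + 1 ≤ 2 * Real.logb 2 n := by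
      have hsq : (2 * (n - k : ℕ) ^ 2 : ℝ) ≤ (n ^ 2 : ℕ) := by
        exact_mod_cast two_mul_sq_sub_half_le_sq hn₂
      have hnk₀ : (0 : ℝ) < (n - k : ℕ) := hk₀.trans_le hk
      have := Real.logb_le_logb_of_le one_lt_two (by positivity) hsq
      rwa [Real.logb_mul two_ne_zero (by positivity), Real.logb_self_eq_one one_lt_two,
        Real.logb_pow, Nat.cast_pow, Real.logb_pow, add_comm] at this
    have hmk := ih (n - k) (by omega) (by omega)
    have hk' := ih k (by omega) (by omega)
    have := hb (n - k) k
    rw [hsplit] at this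
    have hmax := max_le_iff.mpr ⟨hmk, hk'.trans (by gcongr)⟩
    nlinarith

theorem power_displacement_upper_bounds_general
    {X : Type*} [MetricSpace X] (δ : ℝ) (hX : IsDeltaHyperbolic X δ)
    (g : X ≃ᵢ X) (x : X) :
    dist x ((g ^ 2) x) ≤ dist x (g x) + stableDispIso g x + 2 * δ ∧
    (∀ p : ℕ, dist x ((g ^ (2 ^ p)) x) ≤
      dist x (g x) + ((2 : ℝ) ^ p - 1) * stableDispIso g x + 2 * p * δ) ∧
    (∀ n : ℕ, 1 ≤ n → dist x ((g ^ n) x) ≤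
      dist x (g x) + ((n : ℝ) - 1) * stableDispIso g x + 4 * δ * (Real.log n / Real.log 2)) := by
  set b : ℕ → ℝ := fun k => dist x ((g ^ k) x) - ((k : ℝ) - 1) * stableDispIso g x
  have hb : ∀ m n, b (m + n) ≤ max (b m) (b n) + 2 * δ := hX.dist_pow_add_sub_le_max g x
  have hb₁ : b 1 = dist x (g x) := by simp [b]
  refine ⟨?_, fun p => ?_, fun n hn => ?_⟩
  · have h := hb 1 1
    rw [max_self, hb₁] at h
    norm_num [b] at h
    linarith
  · have h := le_add_mul_of_add_self_le (fun k => (hb k k).trans_eq (by rw [max_self])) p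
    rw [hb₁] at h
    simp only [b, Nat.cast_pow, Nat.cast_ofNat] at h
    linarith
  · have h := le_add_mul_logb_of_add_le_max_add (by linarith [hX.nonneg x]) hb hn
    rw [hb₁] at h
    rw [Real.log_div_log]
    simp only [b] at h
    linarith

/-- upper bounds for the displacement of powers of an isometry of a
δ-hyperbolic space. -/
theorem power_displacement_upper_bounds
    {X : Type*} [MetricSpace X] (δ : ℝ) (hδ : 0 < δ) (hX : IsDeltaHyperbolic X δ)
    (g : X ≃ᵢ X) (x : X) :
    dist x ((g ^ 2) x) ≤ dist x (g x) + stableDispIso g x + 2 * δ ∧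
    (∀ p : ℕ, dist x ((g ^ (2 ^ p)) x) ≤
      dist x (g x) + ((2 : ℝ) ^ p - 1) * stableDispIso g x + 2 * p * δ) ∧
    (∀ n : ℕ, 1 ≤ n → dist x ((g ^ n) x) ≤
      dist x (g x) + ((n : ℝ) - 1) * stableDispIso g x + 4 * δ * (Real.log n / Real.log 2)) :=
  power_displacement_upper_bounds_general δ hX g x
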